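/- Let m ≥ 1, let Ω ⊆ ℝ^m be an open set, and let B ⊆ ℝ^m be the origin-centered ball with the same Gaussian volume as Ω, i.e. γ_m(B) = γ_m(Ω). If h : [0, ∞) → [0, ∞) is nonincreasing, then ∫_Ω h(|x|) dγ_m(x) ≤ ∫_B h(|x|) dγ_m(x). -/

import Mathlib

/-!
Bathtub principle. Put `c = h (max R 0)` (`h` is only antitone on `[0, ∞)`, and `R` may be
negative). Off the ball `B` the integrand `h ‖x‖` is at most `c`, on `B` it is at least `c`,
and `Ω \ B`, `B \ Ω` have the same Gaussian measure, so trading `Ω \ B` for `B \ Ω` can only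
increase the integral.
-/

open MeasureTheory Real Set

noncomputable section

/-- The `m`-dimensional Gaussian measure `dγ_m = (2π)^{-m/2} e^{-|x|²/2} dx`. -/
def gaussianMeasure (m : ℕ) : Measure (EuclideanSpace ℝ (Fin m)) :=
  volume.withDensity fun x =>
    ENNReal.ofReal ((2 * π) ^ (-(m : ℝ) / 2) * Real.exp (-‖x‖ ^ 2 / 2))

theorem setIntegral_le_setIntegral_of_measure_eq {α : Type*} [MeasurableSpace α]
    {μ : Measure α} {f : α → ℝ} {s t : Set α} (c : ℝ)
    (hs : MeasurableSet s) (ht : MeasurableSet t) (hst : μ s = μ t) (ht_fin : μ t ≠ ⊤)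
    (hfs : IntegrableOn f s μ) (hft : IntegrableOn f t μ)
    (hle : ∀ x ∈ s \ t, f x ≤ c) (hge : ∀ x ∈ t \ s, c ≤ f x) :
    ∫ x in s, f x ∂μ ≤ ∫ x in t, f x ∂μ := by
  have hsdiff : μ (s \ t) = μ (t \ s) :=
    measure_sdiff_symm hs.nullMeasurableSet ht.nullMeasurableSet hst
      (measure_inter_ne_top_of_right_ne_top ht_fin)
  have hst_fin : μ (s \ t) ≠ ⊤ := hsdiff ▸ measure_ne_top_of_subset sdiff_subset ht_fin
  rw [← integral_inter_add_sdiff ht hfs, ← integral_inter_add_sdiff hs hft, inter_comm t s]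
  refine add_le_add_right ?_ _
  calc ∫ x in s \ t, f x ∂μ ≤ ∫ _ in s \ t, c ∂μ :=
        setIntegral_mono_on (hfs.mono_set sdiff_subset) (integrableOn_const hst_fin)
          (hs.diff ht) hle
    _ = ∫ _ in t \ s, c ∂μ := by rw [setIntegral_const, setIntegral_const, measureReal_def,
          measureReal_def, hsdiff]
    _ ≤ ∫ x in t \ s, f x ∂μ :=
        setIntegral_mono_on (integrableOn_const (hsdiff ▸ hst_fin))
          (hft.mono_set sdiff_subset) (ht.diff hs) hge

theorem integrable_exp_neg_sq_norm_div_two {V : Type*} [NormedAddCommGroup V]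
    [InnerProductSpace ℝ V] [FiniteDimensional ℝ V] [MeasurableSpace V] [BorelSpace V] :
    Integrable (fun x : V => Real.exp (-‖x‖ ^ 2 / 2)) := by
  refine (GaussianFourier.integrable_cexp_neg_mul_sq_norm_add (V := V) (b := 1 / 2)
    (by norm_num) 0 0).norm.congr (ae_of_all _ fun x => ?_)
  simp only [Complex.norm_exp, inner_zero_left, Complex.ofReal_zero, mul_zero, add_zero]
  norm_num
  norm_cast
  ring

instance (m : ℕ) : IsFiniteMeasure (gaussianMeasure m) :=
  isFiniteMeasure_withDensity_ofReal
    (integrable_exp_neg_sq_norm_div_two.const_mul _).hasFiniteIntegral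

theorem AntitoneOn.antitone_comp_max {h : ℝ → ℝ} {a : ℝ} (hh : AntitoneOn h (Ici a)) :
    Antitone fun r => h (max r a) :=
  fun _ _ hrs => hh (le_max_right _ a) (le_max_right _ a) (max_le_max_right a hrs)

theorem integrable_comp_norm_of_antitoneOn {E : Type*} [NormedAddCommGroup E]
    [MeasurableSpace E] [OpensMeasurableSpace E] {μ : Measure E} [IsFiniteMeasure μ]
    {h : ℝ → ℝ} (hnonneg : ∀ r, 0 ≤ r → 0 ≤ h r) (hanti : AntitoneOn h (Ici 0)) :
    Integrable (fun x => h ‖x‖) μ := by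
  have hmeas : Measurable fun x : E => h ‖x‖ := by
    convert hanti.antitone_comp_max.measurable.comp (measurable_norm (α := E)) using 1
    ext x
    simp
  refine .of_bound hmeas.aestronglyMeasurable (h 0) (ae_of_all _ fun x => ?_)
  rw [Real.norm_of_nonneg (hnonneg _ (norm_nonneg x))]
  exact hanti self_mem_Ici (norm_nonneg x) (norm_nonneg x)

theorem gaussian_symmetrization_antitone_general
    (m : ℕ)
    (Ω : Set (EuclideanSpace ℝ (Fin m))) (hΩ : IsOpen Ω)
    (R : ℝ)
    (hvol : gaussianMeasure m (Metric.ball (0 : EuclideanSpace ℝ (Fin m)) R)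
      = gaussianMeasure m Ω)
    (h : ℝ → ℝ)
    (hnonneg : ∀ r, 0 ≤ r → 0 ≤ h r)
    (hanti : AntitoneOn h (Ici (0 : ℝ))) :
    ∫ x in Ω, h ‖x‖ ∂gaussianMeasure m ≤
      ∫ x in Metric.ball (0 : EuclideanSpace ℝ (Fin m)) R, h ‖x‖ ∂gaussianMeasure m := by
  have hf : Integrable (fun x => h ‖x‖) (gaussianMeasure m) :=
    integrable_comp_norm_of_antitoneOn hnonneg hanti
  refine setIntegral_le_setIntegral_of_measure_eq (h (max R 0)) hΩ.measurableSet
    Metric.isOpen_ball.measurableSet hvol.symm (measure_ne_top _ _) hf.integrableOn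
    hf.integrableOn ?_ ?_
  · rintro x ⟨-, hxB⟩
    have hRx : R ≤ ‖x‖ := by simpa using hxB
    exact hanti (le_max_right R 0) (norm_nonneg x) (max_le hRx (norm_nonneg x))
  · rintro x ⟨hxB, -⟩
    have hxR : ‖x‖ < R := by simpa using hxB
    exact hanti (norm_nonneg x) (le_max_right R 0) (le_max_of_le_left hxR.le)

/-- **Lemma 3.1.** Let `Ω ⊆ ℝ^m` be an open set and `B` the origin-centered
ball with the same Gaussian volume as `Ω`. If `h : [0,∞) → [0,∞)` is
nonincreasing, then `∫_Ω h(|x|) dγ_m ≤ ∫_B h(|x|) dγ_m`. -/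
theorem gaussian_symmetrization_antitone
    (m : ℕ) (hm : 1 ≤ m)
    (Ω : Set (EuclideanSpace ℝ (Fin m))) (hΩ : IsOpen Ω)
    (R : ℝ) (hR : 0 ≤ R)
    (hvol : gaussianMeasure m (Metric.ball (0 : EuclideanSpace ℝ (Fin m)) R)
      = gaussianMeasure m Ω)
    (h : ℝ → ℝ)
    (hnonneg : ∀ r, 0 ≤ r → 0 ≤ h r)
    (hanti : AntitoneOn h (Ici (0 : ℝ))) :
    ∫ x in Ω, h ‖x‖ ∂gaussianMeasure m ≤
      ∫ x in Metric.ball (0 : EuclideanSpace ℝ (Fin m)) R, h ‖x‖ ∂gaussianMeasure m :=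
  gaussian_symmetrization_antitone_general m Ω hΩ R hvol h hnonneg hanti
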